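/- arXiv:2507.16304 — 3 statements merged into one kernel-verified Lean document; each statement's English description precedes it below -/
import Mathlib

section
/- Let k be an algebraically closed field, G a linear algebraic group over k, and F : G → G a group endomorphism such that the Lang map g ↦ g⁻¹F(g) restricted to the identity component G° is surjective onto G°. If x ∈ G satisfies x⁻¹F(x) ∈ G° (i.e., the coset xG° is F-stable), then the coset xG° contains an F-fixed point. Consequently, every F-stable connected component of G contains F-fixed points. -/
/-- Lang's theorem argument: if the Lang map `g ↦ g⁻¹F(g)` is surjective on the
normal subgroup `G°` (the "identity component"), then every `F`-stable coset
`xG°` contains an `F`-fixed point. -/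
theorem stmt8 (G : Type*) [Group G] (G₀ : Subgroup G) [G₀.Normal]
    (F : G →* G) (hF : ∀ g ∈ G₀, F g ∈ G₀)
    (hLang : ∀ b ∈ G₀, ∃ g ∈ G₀, g⁻¹ * F g = b) :
    ∀ x : G, x⁻¹ * F x ∈ G₀ → ∃ y : G, x⁻¹ * y ∈ G₀ ∧ F y = y := by
  intro x hx
  obtain ⟨g, hg, hgeq⟩ := hLang _ hx
  refine ⟨x * g⁻¹, by simpa using G₀.inv_mem hg, ?_⟩
  have hFg : F g = g * (x⁻¹ * F x) := by
    rw [← hgeq]; group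
  simp only [map_mul, map_inv, hFg]
  group
end

section
/- Let G be a group, G° ⊴ G, F : G → G a homomorphism preserving G° with surjective Lang map g ↦ g⁻¹F(g) on G°, and suppose every coset of G° in G is F-stable. Then the natural map G^F/(G°)^F → G/G° is surjective, where G^F denotes the F-fixed subgroup. That is, the inclusion of fixed points induces a surjection π₀ of fixed points onto the component group. -/
/-- If every coset of `G°` in `G` is `F`-stable and the Lang map is surjective
on `G°`, then `G^F → G/G°` is surjective: every connected component has
`F`-fixed points representing it. -/
theorem stmt9 (G : Type*) [Group G] (G₀ : Subgroup G) [G₀.Normal]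
    (F : G →* G) (hF : ∀ g ∈ G₀, F g ∈ G₀)
    (hcoset : ∀ x : G, x⁻¹ * F x ∈ G₀)
    (hLang : ∀ b ∈ G₀, ∃ g ∈ G₀, g⁻¹ * F g = b) :
    ∀ x : G, ∃ y : G, F y = y ∧
      (QuotientGroup.mk y : G ⧸ G₀) = QuotientGroup.mk x := by
  intro x
  have hb : x * (F x)⁻¹ ∈ G₀ := by
    have := Subgroup.Normal.conj_mem ‹G₀.Normal› _ (inv_mem (hcoset x)) x
    simpa [mul_assoc] using this
  obtain ⟨g, hg, hgeq⟩ := hLang _ hb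
  refine ⟨g * x, ?_, ?_⟩
  · have : F g = g * (x * (F x)⁻¹) := by
      rw [← hgeq]; group
    rw [map_mul, this]; group
  · refine (QuotientGroup.eq).2 ?_
    have := Subgroup.Normal.conj_mem ‹G₀.Normal› _ (inv_mem hg) x⁻¹
    simpa [mul_assoc] using this
end

section
/- Let G be a group acting transitively on a set X, fix x ∈ X with stabilizer H = Stab_G(x), and let F : G → G be a group automorphism together with a compatible map F : X → X (F(g·y) = F(g)·F(y)) with F(x) = x. Assume the Lang map g ↦ g⁻¹F(g) is surjective on G. Then the map sending an F-fixed point g·x ∈ X^F to the class of the cocycle g⁻¹F(g) ∈ H induces a well-defined bijection between the set of G^F-orbits on X^F and the set of H-twisted-conjugacy classes {h⁻¹ c F(h) : h ∈ H} in {c ∈ H} (i.e., H¹(F, H) defined as H modulo the equivalence c ∼ h⁻¹ c F(h)). -/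
/-- For a transitive `G`-set `X` with compatible Frobenius `F` fixing `x`, and
Lang map surjective on `G`, the assignment `g·x ↦ [g⁻¹F(g)]` induces a
bijection between `G^F`-orbits on `X^F` and twisted conjugacy classes
`H¹(F, H)` for `H = Stab_G(x)`: it is injective on orbits (first conjunct)
and surjective (second conjunct). -/
theorem stmt10 (G X : Type*) [Group G] [MulAction G X]
    (htrans : ∀ y z : X, ∃ g : G, g • y = z)
    (x : X) (F : G ≃* G) (FX : X → X)
    (hcompat : ∀ (g : G) (y : X), FX (g • y) = F g • FX y)
    (hx : FX x = x)
    (hLang : ∀ b : G, ∃ g : G, g⁻¹ * F g = b) :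
    (∀ g₁ g₂ : G, FX (g₁ • x) = g₁ • x → FX (g₂ • x) = g₂ • x →
      ((∃ u : G, F u = u ∧ u • (g₁ • x) = g₂ • x) ↔
        ∃ h ∈ MulAction.stabilizer G x,
          g₂⁻¹ * F g₂ = h⁻¹ * (g₁⁻¹ * F g₁) * F h))
    ∧
    (∀ c ∈ MulAction.stabilizer G x,
      ∃ g : G, FX (g • x) = g • x ∧ g⁻¹ * F g = c) := by
  constructor
  · intro g₁ g₂ _ _
    constructor
    · rintro ⟨u, hu, hux⟩
      refine ⟨g₁⁻¹ * u⁻¹ * g₂, ?_, ?_⟩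
      · rw [MulAction.mem_stabilizer_iff, mul_smul, mul_smul, ← hux,
          smul_smul, smul_smul]
        simp
      · simp only [map_mul, map_inv, hu]
        group
    · rintro ⟨h, hh, heq⟩
      have hF2 : F g₂ = g₂ * (h⁻¹ * (g₁⁻¹ * F g₁) * F h) := by
        rw [← heq]; group
      refine ⟨g₂ * h⁻¹ * g₁⁻¹, ?_, ?_⟩
      · simp only [map_mul, map_inv, hF2]
        group
      · rw [MulAction.mem_stabilizer_iff] at hh
        rw [mul_smul, mul_smul, inv_smul_smul,
          inv_smul_eq_iff.mpr hh.symm]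
  · intro c hc
    obtain ⟨g, hg⟩ := hLang c
    refine ⟨g, ?_, hg⟩
    have : F g = g * c := by rw [← hg]; group
    rw [hcompat, hx, this, mul_smul,
      MulAction.mem_stabilizer_iff.mp hc]
end
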